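/- Let 0 < a ≤ c and 0 < b ≤ d. Then the function F(y) = (erf(a·y)·erf(b·y))/(erf(c·y)·erf(d·y)) is monotonically nondecreasing for y ≥ 1, and strictly increasing if a < c or b < d. -/

import Mathlib

open Real

noncomputable def erf (x : ℝ) : ℝ := (2 / Real.sqrt Real.pi) * ∫ t in (0:ℝ)..x, Real.exp (-t^2)

/-!
Write `F(y) = R_{a,c}(y) · R_{b,d}(y)` with `R_{p,q}(y) = erf(p y) / erf(q y)`, a product of two
positive factors, so it suffices that `R_{p,q}` increases (strictly if `p < q`). For a positive
differentiable `f`, `d/dy log (f(p y) / f(q y)) = (E(p y) - E(q y)) / y` with the elasticity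
`E(t) = t f'(t) / f(t)`, so `R_{p,q}` increases as soon as `E` decreases. For `erf`,
`E(t) = (2/√π) t e^{-t²} / erf t`, whose derivative has the sign of
`(1 - 2t²) erf t - (2/√π) t e^{-t²}`; this is negative since `erf t ≤ (2/√π) t` and
`1 - 2t² < 1 - t² ≤ e^{-t²}`.
-/

open Set

theorem StrictMonoOn.mul_monotoneOn_of_pos {α R : Type*} [Preorder α] [Semiring R] [PartialOrder R]
    [IsStrictOrderedRing R] {s : Set α} {f g : α → R} (hf : StrictMonoOn f s)
    (hg : MonotoneOn g s) (hf₀ : ∀ x ∈ s, 0 ≤ f x) (hg₀ : ∀ x ∈ s, 0 < g x) :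
    StrictMonoOn (f * g) s :=
  fun _ hx _ hy hxy ↦ mul_lt_mul (hf hx hy hxy) (hg hx hy hxy.le) (hg₀ _ hx) (hf₀ _ hy)

theorem HasDerivAt.comp_const_mul {𝕜 : Type*} [NontriviallyNormedField 𝕜] {f : 𝕜 → 𝕜}
    {f' a y : 𝕜} (hf : HasDerivAt f f' (a * y)) :
    HasDerivAt (fun y ↦ f (a * y)) (a * f') y := by
  simpa [Function.comp_def, mul_comm] using hf.comp y ((hasDerivAt_id y).const_mul a)

section DilationRatio

variable {f f' : ℝ → ℝ} {a c : ℝ}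

theorem strictMonoOn_div_comp_mul (hf : ∀ t, 0 < t → HasDerivAt f (f' t) t)
    (hf_pos : ∀ t, 0 < t → 0 < f t) (hE : StrictAntiOn (fun t ↦ t * f' t / f t) (Ioi 0))
    (ha : 0 < a) (hac : a < c) :
    StrictMonoOn (fun y ↦ f (a * y) / f (c * y)) (Ioi 0) := by
  have hc : 0 < c := ha.trans hac
  have hderiv : ∀ y ∈ Ioi (0 : ℝ), HasDerivAt (fun y ↦ f (a * y) / f (c * y))
      ((a * f' (a * y) * f (c * y) - f (a * y) * (c * f' (c * y))) / f (c * y) ^ 2) y :=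
    fun y (hy : 0 < y) ↦
      ((hf _ (mul_pos ha hy)).comp_const_mul).div
        ((hf _ (mul_pos hc hy)).comp_const_mul) (hf_pos _ (mul_pos hc hy)).ne'
  refine strictMonoOn_of_hasDerivWithinAt_pos (convex_Ioi 0)
    (fun y hy ↦ (hderiv y hy).continuousAt.continuousWithinAt)
    (fun y hy ↦ (hderiv y (interior_subset hy)).hasDerivWithinAt) fun y hy ↦ ?_
  rw [interior_Ioi] at hy
  have hy : 0 < y := hy
  have hfa := hf_pos _ (mul_pos ha hy)
  have hfc := hf_pos _ (mul_pos hc hy)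
  have hlt := hE (mul_pos ha hy) (mul_pos hc hy) (by gcongr)
  rw [div_lt_div_iff₀ hfc hfa] at hlt
  refine div_pos ?_ (by positivity)
  have : 0 < y * (a * f' (a * y) * f (c * y) - f (a * y) * (c * f' (c * y))) := by
    linarith
  exact (mul_pos_iff_of_pos_left hy).1 this

theorem monotoneOn_div_comp_mul (hf : ∀ t, 0 < t → HasDerivAt f (f' t) t)
    (hf_pos : ∀ t, 0 < t → 0 < f t) (hE : StrictAntiOn (fun t ↦ t * f' t / f t) (Ioi 0))
    (ha : 0 < a) (hac : a ≤ c) :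
    MonotoneOn (fun y ↦ f (a * y) / f (c * y)) (Ioi 0) := by
  rcases hac.eq_or_lt with rfl | hlt
  · intro x (hx : 0 < x) y (hy : 0 < y) _
    dsimp only
    rw [div_self (hf_pos _ (mul_pos ha hx)).ne', div_self (hf_pos _ (mul_pos ha hy)).ne']
  · exact (strictMonoOn_div_comp_mul hf hf_pos hE ha hlt).monotoneOn

end DilationRatio

section Erf

theorem two_div_sqrt_pi_pos : 0 < 2 / √π := by positivity

theorem continuous_exp_neg_sq : Continuous fun t : ℝ ↦ exp (-t ^ 2) := by fun_prop

theorem hasDerivAt_erf (x : ℝ) : HasDerivAt erf (2 / √π * exp (-x ^ 2)) x :=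
  (continuous_exp_neg_sq.integral_hasStrictDerivAt 0 x)
    |>.hasDerivAt.const_mul _

theorem erf_pos {x : ℝ} (hx : 0 < x) : 0 < erf x :=
  mul_pos two_div_sqrt_pi_pos <| intervalIntegral.intervalIntegral_pos_of_pos
    (continuous_exp_neg_sq.intervalIntegrable _ _) (fun _ ↦ exp_pos _) hx

theorem erf_le_two_div_sqrt_pi_mul {x : ℝ} (hx : 0 ≤ x) : erf x ≤ 2 / √π * x := by
  have h : ∫ t in (0:ℝ)..x, exp (-t ^ 2) ≤ ∫ t in (0:ℝ)..x, (1 : ℝ) :=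
    intervalIntegral.integral_mono_on hx
      (continuous_exp_neg_sq.intervalIntegrable _ _)
      intervalIntegrable_const fun t _ ↦ exp_le_one_iff.mpr (by nlinarith [sq_nonneg t])
  simp only [intervalIntegral.integral_const, smul_eq_mul, mul_one, sub_zero] at h
  exact mul_le_mul_of_nonneg_left h two_div_sqrt_pi_pos.le

theorem one_sub_two_mul_sq_mul_erf_lt {t : ℝ} (ht : 0 < t) :
    (1 - 2 * t ^ 2) * erf t < 2 / √π * t * exp (-t ^ 2) := by
  rcases le_or_gt (1 - 2 * t ^ 2) 0 with h | h
  · have : (1 - 2 * t ^ 2) * erf t ≤ 0 := mul_nonpos_of_nonpos_of_nonneg h (erf_pos ht).le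
    have : 0 < 2 / √π * t * exp (-t ^ 2) := by positivity
    linarith
  · have h_exp : 1 - 2 * t ^ 2 < exp (-t ^ 2) := by
      nlinarith [add_one_le_exp (-t ^ 2)]
    calc (1 - 2 * t ^ 2) * erf t ≤ (1 - 2 * t ^ 2) * (2 / √π * t) :=
          mul_le_mul_of_nonneg_left (erf_le_two_div_sqrt_pi_mul ht.le) h.le
      _ = 2 / √π * t * (1 - 2 * t ^ 2) := by ring
      _ < 2 / √π * t * exp (-t ^ 2) := by gcongr

theorem strictAntiOn_erf_elasticity :
    StrictAntiOn (fun t ↦ t * (2 / √π * exp (-t ^ 2)) / erf t) (Ioi 0) := by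
  have hderiv : ∀ t ∈ Ioi (0 : ℝ), HasDerivAt (fun t ↦ t * (2 / √π * exp (-t ^ 2)) / erf t)
      ((2 / √π * ((1 - 2 * t ^ 2) * exp (-t ^ 2)) * erf t
        - t * (2 / √π * exp (-t ^ 2)) * (2 / √π * exp (-t ^ 2))) / erf t ^ 2) t := by
    intro t (ht : 0 < t)
    have h_num : HasDerivAt (fun t ↦ t * (2 / √π * exp (-t ^ 2)))
        (2 / √π * ((1 - 2 * t ^ 2) * exp (-t ^ 2))) t := by
      have h_exp : HasDerivAt (fun t ↦ exp (-t ^ 2)) (exp (-t ^ 2) * -(2 * t)) t := by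
        simpa using (hasDerivAt_pow 2 t).neg.exp
      exact ((hasDerivAt_id' t).mul (h_exp.const_mul (2 / √π))).congr_deriv (by ring)
    exact h_num.div (hasDerivAt_erf t) (erf_pos ht).ne'
  refine strictAntiOn_of_hasDerivWithinAt_neg (convex_Ioi 0)
    (fun t ht ↦ (hderiv t ht).continuousAt.continuousWithinAt)
    (fun t ht ↦ (hderiv t (interior_subset ht)).hasDerivWithinAt) fun t ht ↦ ?_
  rw [interior_Ioi] at ht
  have ht : 0 < t := ht
  have hkey := one_sub_two_mul_sq_mul_erf_lt ht
  refine div_neg_of_neg_of_pos ?_ (pow_pos (erf_pos ht) 2)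
  have : 2 / √π * exp (-t ^ 2) * ((1 - 2 * t ^ 2) * erf t - 2 / √π * t * exp (-t ^ 2)) < 0 :=
    mul_neg_of_pos_of_neg (by positivity) (by linarith)
  linarith

theorem strictMonoOn_erf_div_erf {a c : ℝ} (ha : 0 < a) (hac : a < c) :
    StrictMonoOn (fun y ↦ erf (a * y) / erf (c * y)) (Ioi 0) :=
  strictMonoOn_div_comp_mul (fun t _ ↦ hasDerivAt_erf t) (fun _ ↦ erf_pos)
    strictAntiOn_erf_elasticity ha hac

theorem monotoneOn_erf_div_erf {a c : ℝ} (ha : 0 < a) (hac : a ≤ c) :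
    MonotoneOn (fun y ↦ erf (a * y) / erf (c * y)) (Ioi 0) :=
  monotoneOn_div_comp_mul (fun t _ ↦ hasDerivAt_erf t) (fun _ ↦ erf_pos)
    strictAntiOn_erf_elasticity ha hac

theorem erf_div_erf_pos {a c y : ℝ} (ha : 0 < a) (hac : a ≤ c) (hy : 0 < y) :
    0 < erf (a * y) / erf (c * y) :=
  div_pos (erf_pos (mul_pos ha hy)) (erf_pos (mul_pos (ha.trans_le hac) hy))

end Erf

theorem F_monotone (a b c d : ℝ) (ha : 0 < a) (hac : a ≤ c) (hb : 0 < b) (hbd : b ≤ d) :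
    MonotoneOn (fun y : ℝ => (erf (a*y) * erf (b*y)) / (erf (c*y) * erf (d*y)))
      (Set.Ici (1:ℝ)) ∧
    ((a < c ∨ b < d) →
      StrictMonoOn (fun y : ℝ => (erf (a*y) * erf (b*y)) / (erf (c*y) * erf (d*y)))
        (Set.Ici (1:ℝ))) := by
  have hF : (fun y : ℝ => (erf (a*y) * erf (b*y)) / (erf (c*y) * erf (d*y))) =
      (fun y ↦ erf (a * y) / erf (c * y)) * (fun y ↦ erf (b * y) / erf (d * y)) := by
    funext y
    exact mul_div_mul_comm _ _ _ _
  have hIci : Ici (1 : ℝ) ⊆ Ioi 0 := Ici_subset_Ioi.mpr one_pos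
  have hpos_ac y (hy : y ∈ Ici (1 : ℝ)) := erf_div_erf_pos ha hac (hIci hy)
  have hpos_bd y (hy : y ∈ Ici (1 : ℝ)) := erf_div_erf_pos hb hbd (hIci hy)
  have hmono_ac := (monotoneOn_erf_div_erf ha hac).mono hIci
  have hmono_bd := (monotoneOn_erf_div_erf hb hbd).mono hIci
  rw [hF]
  refine ⟨hmono_ac.mul hmono_bd (fun y hy ↦ (hpos_ac y hy).le) fun y hy ↦ (hpos_bd y hy).le, ?_⟩
  rintro (h | h)
  · exact ((strictMonoOn_erf_div_erf ha h).mono hIci).mul_monotoneOn_of_pos hmono_bd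
      (fun y hy ↦ (hpos_ac y hy).le) hpos_bd
  · rw [mul_comm]
    exact ((strictMonoOn_erf_div_erf hb h).mono hIci).mul_monotoneOn_of_pos hmono_ac
      (fun y hy ↦ (hpos_bd y hy).le) hpos_ac
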